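/- arXiv:2011.01778 — 3 statements merged into one kernel-verified Lean document; each statement's English description precedes it below -/
import Mathlib

section
/- There exists an HGCRP instance with two agents that admits no Nash stable partition: with N = {1,2} and utilities U({1}) = 1, U({1,2}) = 2, U({2}) = 3, every partition of N admits a beneficial individual deviation (an agent i moving to an existing coalition C, possibly the empty coalition, with U(C ∪ {i}) > U(π(i))). -/
open Finset

/-- `P` maps each agent to its coalition in a partition: each agent belongs to its
own coalition, and agents in the same coalition have the same coalition. -/
def IsPartitionMap {N : Type*} (P : N → Finset N) : Prop :=
  (∀ i, i ∈ P i) ∧ (∀ i j, j ∈ P i → P j = P i)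

/-!
Fin 2 has only two partitions, and the utilities make each one unstable: in the grand
coalition agent `1` gains by leaving (`U {1} = 3 > 2`), and among singletons agent `0`
gains by joining agent `1` (`U {0, 1} = 2 > 1`).
-/

/-- Only the values on nonempty coalitions matter; this one gives `∅` the value `1`. -/
def cyclicUtility (S : Finset (Fin 2)) : ℝ :=
  if 1 ∈ S then (if 0 ∈ S then 2 else 3) else 1

theorem IsPartitionMap.mem_symm {N : Type*} {P : N → Finset N} (hP : IsPartitionMap P)
    {i j : N} (h : j ∈ P i) : i ∈ P j :=
  hP.2 i j h ▸ hP.1 i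

theorem IsPartitionMap.fin_two {P : Fin 2 → Finset (Fin 2)} (hP : IsPartitionMap P) :
    (P 0 = {0, 1} ∧ P 1 = {0, 1}) ∨ (P 0 = {0} ∧ P 1 = {1}) := by
  by_cases h : (1 : Fin 2) ∈ P 0
  · have h0 : P 0 = {0, 1} := by
      ext x; fin_cases x <;> simp [hP.1 0, h]
    exact Or.inl ⟨h0, hP.2 0 1 h ▸ h0⟩
  · have h1 : (0 : Fin 2) ∉ P 1 := fun h' => h (hP.mem_symm h')
    right
    constructor <;> ext x <;> fin_cases x <;> simp [hP.1 0, hP.1 1, h, h1]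

/-- there is a two-agent HGCRP instance (with `U({1})=1`, `U({1,2})=2`,
`U({2})=3`) admitting no Nash stable partition: in every partition some agent can
strictly benefit by moving to an existing coalition or to the empty coalition. -/
theorem exists_HGCRP_no_nash_stable :
    ∃ U : Finset (Fin 2) → ℝ,
      U {0} = 1 ∧ U {0, 1} = 2 ∧ U {1} = 3 ∧
      ∀ P : Fin 2 → Finset (Fin 2), IsPartitionMap P →
        ∃ (i : Fin 2) (C : Finset (Fin 2)),
          (C = ∅ ∨ ∃ j, C = P j) ∧ C ≠ P i ∧ U (insert i C) > U (P i) := by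
  refine ⟨cyclicUtility, by simp [cyclicUtility], by simp [cyclicUtility],
    by simp [cyclicUtility], fun P hP => ?_⟩
  rcases hP.fin_two with ⟨-, h1⟩ | ⟨h0, h1⟩
  · refine ⟨1, ∅, Or.inl rfl, by rw [h1]; exact (insert_ne_empty _ _).symm, ?_⟩
    norm_num [h1, cyclicUtility]
  · refine ⟨0, P 1, Or.inr ⟨1, rfl⟩, by simp [h0, h1], ?_⟩
    norm_num [h0, h1, cyclicUtility]
end

section
/- Let ψ(π) denote the multiset of agent utilities of partition π sorted in non-increasing order, compared lexicographically. If a coalition C blocks π (i.e., U(C) > U(π(i)) for all i ∈ C), then ψ(π_C) is lexicographically strictly greater than ψ(π), where π_C is the partition obtained from π by the agents in C deviating to form C. -/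
open Finset

/-- `ψ(π)`: the sequence of all agents' utilities sorted in non-increasing order. -/
noncomputable def psi {N : Type*} [Fintype N] (U : Finset N → ℝ) (P : N → Finset N) :
    List ℝ :=
  (Finset.univ.toList.map fun i => U (P i)).insertionSort (fun a b => b ≤ a)

/-- The partition `π_C` induced on `π` by the deviating coalition `C`. -/
def deviate {N : Type*} [DecidableEq N] (P : N → Finset N) (C : Finset N) :
    N → Finset N :=
  fun i => if i ∈ C then C else P i \ C

/-! Put `t = U C`. An agent whose utility in `π` is at least `t` lies outside `C`, and so does
its whole coalition (its members have that same utility), so it is unaffected by the deviation.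
Hence the utilities `≥ t` of `π` form a sub-multiset of those of `π_C`, a strict one because
the members of `C` rise from below `t` to `t`. For sorted sequences this forces
`ψ(π) <lex ψ(π_C)`. -/

theorem List.lex_lt_of_filter_lt {α : Type*} [LinearOrder α] (t : α) {a b : List α}
    (hb : b.Pairwise (· ≥ ·))
    (h : Multiset.filter (t ≤ ·) (a : Multiset α) < Multiset.filter (t ≤ ·) b) :
    List.Lex (· < ·) a b := by
  induction a generalizing b with
  | nil =>
    cases b with
    | nil => exact absurd h (lt_irrefl _)
    | cons => exact .nil
  | cons x a ih =>
    cases b with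
    | nil => simp at h
    | cons y b =>
      rw [← Multiset.cons_coe, ← Multiset.cons_coe] at h
      rcases lt_trichotomy x y with hxy | rfl | hyx
      · exact .rel hxy
      · refine .cons (ih hb.of_cons ?_)
        by_cases hx : t ≤ x
        · rwa [Multiset.filter_cons_of_pos _ hx, Multiset.filter_cons_of_pos _ hx,
            Multiset.cons_lt_cons_iff] at h
        · rwa [Multiset.filter_cons_of_neg _ hx, Multiset.filter_cons_of_neg _ hx] at h
      · have le_y : ∀ v ∈ y ::ₘ (b : Multiset α), v ≤ y := by
          simpa using (List.pairwise_cons.mp hb).1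
        obtain ⟨v, hv⟩ := Multiset.exists_mem_of_ne_zero ((Multiset.zero_le _).trans_lt h).ne'
        have htx : t ≤ x :=
          (Multiset.of_mem_filter hv).trans ((le_y v (Multiset.mem_of_mem_filter hv)).trans hyx.le)
        have hx : x ∈ Multiset.filter (t ≤ ·) (y ::ₘ (b : Multiset α)) :=
          Multiset.mem_of_le h.le (by simp [htx])
        exact absurd (le_y x (Multiset.mem_of_mem_filter hx)) hyx.not_ge

theorem Multiset.filter_map_lt_filter_map {ι α : Type*} {p : α → Prop} [DecidablePred p]
    {s : Multiset ι} {f g : ι → α} (hfg : ∀ i ∈ s, p (f i) → g i = f i)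
    {i₀ : ι} (hi₀ : i₀ ∈ s) (hf : ¬ p (f i₀)) (hg : p (g i₀)) :
    (s.map f).filter p < (s.map g).filter p := by
  have hlt : s.filter (p ∘ f) < s.filter (p ∘ g) := by
    refine lt_of_le_of_ne (Multiset.le_filter.mpr ⟨filter_le _ _, fun i hi => ?_⟩) fun he => ?_
    · rw [mem_filter] at hi
      simpa [hfg i hi.1 hi.2] using hi.2
    · have : i₀ ∈ s.filter (p ∘ f) := he ▸ mem_filter.mpr ⟨hi₀, hg⟩
      exact hf (mem_filter.mp this).2
  rw [filter_map, filter_map]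
  calc (s.filter (p ∘ f)).map f = (s.filter (p ∘ f)).map g :=
        map_congr rfl fun i hi => (hfg i (mem_filter.mp hi).1 (mem_filter.mp hi).2).symm
    _ < (s.filter (p ∘ g)).map g :=
        lt_of_le_of_ne (map_le_map hlt.le) fun he =>
          (card_lt_card hlt).ne (by simpa using congrArg card he)

section

variable {N : Type*}

theorem coe_psi [Fintype N] (U : Finset N → ℝ) (P : N → Finset N) :
    (psi U P : Multiset ℝ) = univ.val.map fun i => U (P i) := by
  rw [psi, Multiset.coe_eq_coe.mpr (List.perm_insertionSort _ _), ← Multiset.map_coe,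
    Finset.coe_toList]

theorem pairwise_psi [Fintype N] (U : Finset N → ℝ) (P : N → Finset N) :
    (psi U P).Pairwise (· ≥ ·) :=
  List.pairwise_insertionSort _ _

theorem deviate_eq_self_of_le [DecidableEq N] {U : Finset N → ℝ} {P : N → Finset N}
    (hP : IsPartitionMap P) {C : Finset N} (hblock : ∀ i ∈ C, U (P i) < U C) {i : N}
    (hi : U C ≤ U (P i)) : deviate P C i = P i := by
  have hiC : i ∉ C := fun h => (hblock i h).not_ge hi
  have hdisj : Disjoint (P i) C := disjoint_left.mpr fun j hj hjC =>
    (hblock j hjC).not_ge (hP.2 i j hj ▸ hi)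
  simp [deviate, hiC, sdiff_eq_self_of_disjoint hdisj]

end

/-- if a coalition `C` blocks `π`, then `ψ(π_C)` is lexicographically
strictly greater than `ψ(π)`. -/
theorem psi_lt_of_blocking {N : Type*} [DecidableEq N] [Fintype N]
    (U : Finset N → ℝ) (P : N → Finset N) (hP : IsPartitionMap P)
    (C : Finset N) (hC : C.Nonempty) (hblock : ∀ i ∈ C, U (P i) < U C) :
    List.Lex (· < ·) (psi U P) (psi U (deviate P C)) := by
  obtain ⟨i₀, hi₀⟩ := hC
  refine List.lex_lt_of_filter_lt (U C) (pairwise_psi U _) ?_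
  rw [coe_psi, coe_psi]
  refine Multiset.filter_map_lt_filter_map (fun i _ hi => ?_) (mem_univ i₀)
    (hblock i₀ hi₀).not_ge (by simp [deviate, hi₀])
  rw [deviate_eq_self_of_le hP hblock hi]
end

section
/- In a (0,β)-HEG, imitative better response dynamics starting from a partition into ⌊|N|/κ⌋ coalitions of size exactly κ plus one leftover coalition L of size |L| < κ terminates in a Nash stable partition after at most β·|S|·⌊|N|/κ⌋·(κ−|L|) individual moves, which is O(|N|·|S|) for constant β. -/
open Finset

/-- Joint utility in a `(0,β)`-HEG, with natural-number expertise levels. -/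
def jointU {N S : Type*} [Fintype S] (e : N → S → ℕ) (C : Finset N) : ℕ :=
  ∑ s, C.sup fun i => e i s

/-- Nash stability in an HEG: no agent benefits from moving to an existing coalition
of size `< κ`. -/
def NashStableHEG {N S : Type*} [DecidableEq N] [Fintype S] (e : N → S → ℕ) (κ : ℕ)
    (P : N → Finset N) : Prop :=
  ∀ i C, (∃ j, C = P j) → i ∉ C → C.card < κ →
    jointU e (insert i C) ≤ jointU e (P i)

/-!
Group the moves into phases of `κ - |L|` moves. Between phases every coalition is full except
one coalition `D` with `|D| = |L|`. A phase opens with a better response of an agent `m` from a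
full coalition `C` to `D`; imitation then carries the members of `C` to `D` one at a time, until
`D` is full and `C` has `|L|` members left.

The potential `κ · Σ U(C')`, summed over the full coalitions `C'`, gains at least `κ` per phase:
it loses `κ · U(C)` and gains `κ · U(D') ≥ κ · U(D ∪ {m}) > κ · U(C)` for the final `D'`. It is
at most `κ ⌊|N|/κ⌋ · β|S|`, since the agents in full coalitions come in groups of `κ`. So there
are at most `β|S|⌊|N|/κ⌋` phases, an unfinished last one included.
-/

namespace IsPartitionMap

variable {N : Type*} {P : N → Finset N}

theorem mem_self (hP : IsPartitionMap P) (i : N) : i ∈ P i := hP.1 i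

theorem eq_of_mem (hP : IsPartitionMap P) {i j : N} (h : i ∈ P j) : P i = P j := hP.2 j i h

theorem mem_block (hP : IsPartitionMap P) (j : N) : ∀ i ∈ P j, P i = P j :=
  fun _ => hP.eq_of_mem

theorem disjoint_of_notMem (hP : IsPartitionMap P) {m : N} {D : Finset N}
    (hD : ∀ i ∈ D, P i = D) (hm : m ∉ D) : Disjoint (P m) D :=
  disjoint_left.2 fun i hi hiD => hm (by rw [← hD i hiD, hP.eq_of_mem hi]; exact hP.mem_self m)

end IsPartitionMap

theorem sum_block_eq_card_nsmul {N M : Type*} [AddCommMonoid M] {P : N → Finset N}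
    (g : Finset N → M) {C : Finset N} (hC : ∀ i ∈ C, P i = C) :
    ∑ i ∈ C, g (P i) = C.card • g C := by
  rw [Finset.sum_congr rfl fun i hi => congrArg g (hC i hi), sum_const]

section Move

variable {N : Type*} [DecidableEq N]

def moveTo (P : N → Finset N) (m : N) (D : Finset N) : N → Finset N :=
  fun a => if a ∈ insert m D then insert m D else (P a).erase m

variable {P : N → Finset N} {m : N} {D : Finset N}

theorem moveTo_of_mem_insert {i : N} (hi : i ∈ insert m D) : moveTo P m D i = insert m D :=
  if_pos hi

theorem moveTo_of_mem_erase (hP : IsPartitionMap P) (hD : ∀ i ∈ D, P i = D) (hm : m ∉ D)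
    {i : N} (hi : i ∈ (P m).erase m) : moveTo P m D i = (P m).erase m := by
  obtain ⟨him, hiP⟩ := mem_erase.1 hi
  have hiD : i ∉ D := disjoint_left.1 (hP.disjoint_of_notMem hD hm) hiP
  rw [moveTo, if_neg (by simp [him, hiD]), hP.eq_of_mem hiP]

theorem moveTo_of_notMem (hP : IsPartitionMap P) {i : N} (hiP : i ∉ P m) (hiD : i ∉ D) :
    moveTo P m D i = P i := by
  have him : i ≠ m := by rintro rfl; exact hiP (hP.mem_self i)
  have hmi : m ∉ P i := fun h => hiP (by rw [hP.eq_of_mem h]; exact hP.mem_self i)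
  rw [moveTo, if_neg (by simp [him, hiD]), erase_eq_of_notMem hmi]

theorem sum_moveTo [Fintype N] {M : Type*} [AddCommMonoid M] (g : Finset N → M)
    (hP : IsPartitionMap P) (hD : ∀ i ∈ D, P i = D) (hm : m ∉ D) :
    ∑ i, g (moveTo P m D i) + ((P m).card • g (P m) + D.card • g D) =
      ∑ i, g (P i) + ((insert m D).card • g (insert m D) +
        ((P m).erase m).card • g ((P m).erase m)) := by
  have hdisj := hP.disjoint_of_notMem hD hm
  have hdisj' : Disjoint (insert m D) ((P m).erase m) := by
    rw [disjoint_insert_left]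
    exact ⟨notMem_erase m _, disjoint_left.2 fun i hi hi' =>
      disjoint_left.1 hdisj (mem_of_mem_erase hi') hi⟩
  have hunion : insert m D ∪ (P m).erase m = P m ∪ D := by
    ext i
    by_cases him : i = m <;> simp [him, hP.mem_self m, or_comm]
  have hout : ∀ i ∈ (P m ∪ D)ᶜ, g (moveTo P m D i) = g (P i) := fun i hi => by
    simp only [mem_compl, mem_union, not_or] at hi
    rw [moveTo_of_notMem hP hi.1 hi.2]
  have hbefore : ∑ i, g (P i) = (P m).card • g (P m) + D.card • g D +
      ∑ i ∈ (P m ∪ D)ᶜ, g (P i) := by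
    rw [← sum_add_sum_compl (P m ∪ D), sum_union hdisj,
      sum_block_eq_card_nsmul g (hP.mem_block m), sum_block_eq_card_nsmul g hD]
  have hafter : ∑ i, g (moveTo P m D i) = (insert m D).card • g (insert m D) +
      ((P m).erase m).card • g ((P m).erase m) + ∑ i ∈ (P m ∪ D)ᶜ, g (P i) := by
    rw [← sum_add_sum_compl (P m ∪ D), sum_congr rfl hout, ← hunion, sum_union hdisj',
      sum_block_eq_card_nsmul g fun i hi => moveTo_of_mem_insert hi,
      sum_block_eq_card_nsmul g fun i hi => moveTo_of_mem_erase hP hD hm hi]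
  rw [hbefore, hafter]
  abel

end Move

theorem Nat.le_mul_div_of_dvd {k a n : ℕ} (h : k ∣ a) (ha : a ≤ n) : a ≤ k * (n / k) :=
  (Nat.mul_div_cancel' h).symm.le.trans (Nat.mul_le_mul_left k (Nat.div_le_div_right ha))

section Potential

variable {N S : Type*} [Fintype S] (e : N → S → ℕ) (κ : ℕ)

theorem jointU_mono {C D : Finset N} (h : C ⊆ D) : jointU e C ≤ jointU e D :=
  sum_le_sum fun _ _ => sup_mono h

theorem jointU_le {β : ℕ} (hβ : ∀ i s, e i s ≤ β) (C : Finset N) :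
    jointU e C ≤ Fintype.card S * β :=
  calc jointU e C ≤ ∑ _s : S, β := sum_le_sum fun s _ => Finset.sup_le fun i _ => hβ i s
    _ = Fintype.card S * β := by rw [sum_const, card_univ, smul_eq_mul]

def fullValue (C : Finset N) : ℕ := if C.card = κ then jointU e C else 0

/-- `κ` times the total utility of the coalitions of size exactly `κ`. -/
def fullPotential [Fintype N] (P : N → Finset N) : ℕ := ∑ i, fullValue e κ (P i)

/-- The potential while the coalition `D` is being filled up: `D` is already counted as full. -/
def phasePotential [Fintype N] (P : N → Finset N) (D : Finset N) : ℕ :=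
  fullPotential e κ P + if D.card < κ then κ * jointU e D else 0

variable {e κ}

theorem fullValue_of_card_ne {C : Finset N} (h : C.card ≠ κ) : fullValue e κ C = 0 := if_neg h

theorem fullPotential_moveTo [DecidableEq N] [Fintype N] {P : N → Finset N} {m : N}
    {D : Finset N} (hP : IsPartitionMap P) (hD : ∀ i ∈ D, P i = D) (hm : m ∉ D)
    (hDκ : D.card < κ) (hmκ : (P m).card ≤ κ) :
    fullPotential e κ (moveTo P m D) + (P m).card * fullValue e κ (P m) =
      fullPotential e κ P + (insert m D).card * fullValue e κ (insert m D) := by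
  have hsum := sum_moveTo (fullValue e κ) hP hD hm
  have hpos : 0 < (P m).card := card_pos.2 ⟨m, hP.mem_self m⟩
  have hsource : ((P m).erase m).card ≠ κ := by
    rw [card_erase_of_mem (hP.mem_self m)]; omega
  rwa [fullValue_of_card_ne hDκ.ne, fullValue_of_card_ne hsource, smul_zero, smul_zero,
    add_zero, add_zero, smul_eq_mul, smul_eq_mul] at hsum

theorem phasePotential_moveTo [DecidableEq N] [Fintype N] {P : N → Finset N} {m : N}
    {D : Finset N} (hP : IsPartitionMap P) (hD : ∀ i ∈ D, P i = D) (hm : m ∉ D)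
    (hDκ : D.card < κ) (hmκ : (P m).card ≤ κ) :
    phasePotential e κ (moveTo P m D) (insert m D) + (P m).card * fullValue e κ (P m) =
      fullPotential e κ P + κ * jointU e (insert m D) := by
  have hsum := fullPotential_moveTo (e := e) hP hD hm hDκ hmκ
  have hE : (insert m D).card = D.card + 1 := card_insert_of_notMem hm
  rw [phasePotential]
  by_cases hfull : (insert m D).card = κ
  · rw [if_neg hfull.not_lt, add_zero, hsum, fullValue, if_pos hfull, hfull]
  · rw [if_pos (by omega), add_right_comm, hsum, fullValue_of_card_ne hfull, mul_zero, add_zero]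

theorem fullPotential_le_card_mul [Fintype N] {β : ℕ} (hβ : ∀ i s, e i s ≤ β)
    (P : N → Finset N) :
    fullPotential e κ P ≤ #{i | (P i).card = κ} * (Fintype.card S * β) := by
  rw [fullPotential, ← smul_eq_mul]
  simp only [fullValue, ← sum_filter]
  exact sum_le_card_nsmul _ _ _ fun i _ => jointU_le e hβ (P i)

end Potential

theorem IsPartitionMap.dvd_card_filter_card_eq {N : Type*} [Fintype N] [DecidableEq N]
    {P : N → Finset N} (hP : IsPartitionMap P) (κ : ℕ) : κ ∣ #{i | (P i).card = κ} := by
  rw [card_eq_sum_card_image P]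
  refine dvd_sum fun C hC => ?_
  obtain ⟨j, hj, rfl⟩ := mem_image.1 hC
  have hblock : ({i ∈ {i | (P i).card = κ} | P i = P j} : Finset N) = P j := by
    ext i
    simp only [mem_filter, mem_univ, true_and]
    exact ⟨fun h => h.2 ▸ hP.mem_self i,
      fun h => ⟨(hP.eq_of_mem h).symm ▸ (mem_filter.1 hj).2, hP.eq_of_mem h⟩⟩
  rw [hblock, (mem_filter.1 hj).2]

theorem fullPotential_le {N S : Type*} [Fintype N] [DecidableEq N] [Fintype S]
    {e : N → S → ℕ} {κ β : ℕ} (hβ : ∀ i s, e i s ≤ β) {P : N → Finset N}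
    (hP : IsPartitionMap P) :
    fullPotential e κ P ≤ κ * (Fintype.card N / κ) * (Fintype.card S * β) :=
  (fullPotential_le_card_mul hβ P).trans <| Nat.mul_le_mul_right _ <|
    Nat.le_mul_div_of_dvd (hP.dvd_card_filter_card_eq κ) (card_le_univ _)

section Phase

variable {N : Type*} {κ ℓ r : ℕ} {P : N → Finset N} {C D : Finset N}

def IsRestState (κ ℓ : ℕ) (P : N → Finset N) : Prop :=
  ∃ L : Finset N, L.card = ℓ ∧ ∀ i, (P i).card = κ ∨ P i = L

structure IsMidPhase (κ ℓ r : ℕ) (P : N → Finset N) (C D : Finset N) : Prop where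
  card_source : C.card + r = κ
  card_target : D.card = ℓ + r
  disjoint : Disjoint C D
  source_block : ∀ i ∈ C, P i = C
  target_block : ∀ i ∈ D, P i = D
  card_of_notMem : ∀ i, i ∉ C → i ∉ D → (P i).card = κ

theorem IsRestState.isMidPhase_zero (h : IsRestState κ ℓ P) (hP : IsPartitionMap P) {m : N}
    (hD : ∃ j, D = P j) (hDκ : D.card < κ) (hm : m ∉ D) : IsMidPhase κ ℓ 0 P (P m) D := by
  obtain ⟨L, hL, hshape⟩ := h
  obtain ⟨j, rfl⟩ := hD
  have hjL : P j = L := (hshape j).resolve_left hDκ.ne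
  have hm_full : (P m).card = κ :=
    (hshape m).resolve_right fun h => hm (hjL ▸ h ▸ hP.mem_self m)
  refine ⟨hm_full, hjL ▸ hL, hP.disjoint_of_notMem (hP.mem_block j) hm, hP.mem_block m,
    hP.mem_block j, fun i hiC hiD => (hshape i).resolve_right fun h => ?_⟩
  exact hiD (hjL ▸ h ▸ hP.mem_self i)

theorem IsMidPhase.moveTo [DecidableEq N] (h : IsMidPhase κ ℓ r P C D)
    (hP : IsPartitionMap P) {m : N} (hm : m ∈ C) : IsMidPhase κ ℓ (r + 1) (moveTo P m D) (C.erase m) (insert m D) := by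
  have hPm : P m = C := h.source_block m hm
  have hmD : m ∉ D := disjoint_left.1 h.disjoint hm
  refine ⟨?_, ?_, ?_, ?_, fun i hi => moveTo_of_mem_insert hi, fun i hiC hiD => ?_⟩
  · rw [card_erase_of_mem hm, ← h.card_source]
    have := card_pos.2 ⟨m, hm⟩
    omega
  · rw [card_insert_of_notMem hmD, h.card_target, add_assoc]
  · exact disjoint_insert_right.2 ⟨notMem_erase m C,
      disjoint_of_subset_left (erase_subset m C) h.disjoint⟩
  · intro i hi
    rw [← hPm] at hi ⊢
    exact moveTo_of_mem_erase hP h.target_block hmD hi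
  · have him : i ≠ m := fun him => hiD (him ▸ mem_insert_self m D)
    have hiC' : i ∉ C := fun hiC' => hiC (mem_erase.2 ⟨him, hiC'⟩)
    have hiD' : i ∉ D := fun hiD' => hiD (mem_insert_of_mem hiD')
    rw [moveTo_of_notMem hP (hPm ▸ hiC') hiD']
    exact h.card_of_notMem i hiC' hiD'

theorem IsMidPhase.isRestState (h : IsMidPhase κ ℓ r P C D) (hr : ℓ + r = κ) :
    IsRestState κ ℓ P := by
  refine ⟨C, by have := h.card_source; omega, fun i => ?_⟩
  by_cases hiC : i ∈ C
  · exact Or.inr (h.source_block i hiC)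
  by_cases hiD : i ∈ D
  · exact Or.inl (by rw [h.target_block i hiD, h.card_target, hr])
  exact Or.inl (h.card_of_notMem i hiC hiD)

theorem IsMidPhase.phasePotential_le [Fintype N] [DecidableEq N] {S : Type*} [Fintype S]
    {e : N → S → ℕ} {β : ℕ} (hβ : ∀ i s, e i s ≤ β) (h : IsMidPhase κ ℓ r P C D) (hP : IsPartitionMap P)
    (hr : 0 < r) (hrκ : ℓ + r < κ) :
    phasePotential e κ P D ≤ κ * (Fintype.card N / κ) * (Fintype.card S * β) := by
  have hnonfull : Disjoint ({i | (P i).card = κ} : Finset N) (C ∪ D) := by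
    refine disjoint_left.2 fun i hi hCD => ?_
    rw [mem_filter] at hi
    rcases mem_union.1 hCD with hiC | hiD
    · have := h.card_source
      rw [h.source_block i hiC] at hi
      omega
    · rw [h.target_block i hiD, h.card_target] at hi
      omega
  have hcount : #{i | (P i).card = κ} + κ ≤ κ * (Fintype.card N / κ) := by
    refine Nat.le_mul_div_of_dvd (dvd_add (hP.dvd_card_filter_card_eq κ) dvd_rfl) ?_
    calc #{i | (P i).card = κ} + κ
        ≤ #{i | (P i).card = κ} + (C ∪ D).card := by
          rw [card_union_of_disjoint h.disjoint, h.card_target]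
          have := h.card_source
          omega
      _ = (_ ∪ (C ∪ D)).card := (card_union_of_disjoint hnonfull).symm
      _ ≤ Fintype.card N := card_le_univ _
  rw [phasePotential, if_pos (by rw [h.card_target]; exact hrκ)]
  calc fullPotential e κ P + κ * jointU e D
      ≤ #{i | (P i).card = κ} * (Fintype.card S * β) + κ * (Fintype.card S * β) :=
        add_le_add (fullPotential_le_card_mul hβ P) (Nat.mul_le_mul_left κ (jointU_le e hβ D))
    _ = (#{i | (P i).card = κ} + κ) * (Fintype.card S * β) := (add_mul _ _ _).symm
    _ ≤ κ * (Fintype.card N / κ) * (Fintype.card S * β) := Nat.mul_le_mul_right _ hcount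

end Phase

section Run

variable {N S : Type*} [DecidableEq N] [Fintype N] [Fintype S] {e : N → S → ℕ} {κ ℓ T : ℕ}
  {f : ℕ → N → Finset N} {mover : ℕ → N} {dest : ℕ → Finset N}

structure IsImitativeRun (e : N → S → ℕ) (κ T : ℕ) (f : ℕ → N → Finset N) (mover : ℕ → N)
    (dest : ℕ → Finset N) : Prop where
  isPartitionMap : ∀ t, t ≤ T → IsPartitionMap (f t)
  dest_eq : ∀ t, t < T → ∃ j, dest t = f t j
  mover_notMem : ∀ t, t < T → mover t ∉ dest t
  card_dest_lt : ∀ t, t < T → (dest t).card < κ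
  better : ∀ t, t < T → jointU e (f t (mover t)) < jointU e (insert (mover t) (dest t))
  step : ∀ t, t < T → f (t + 1) = moveTo (f t) (mover t) (dest t)
  imitate : ∀ t, t + 1 < T → (insert (mover t) (dest t)).card < κ →
    mover (t + 1) ∈ (f t (mover t)).erase (mover t) ∧ dest (t + 1) = insert (mover t) (dest t)

/-- At time `t = q * (κ - ℓ) + r` the run has completed `q` phases and is `r` moves into the
next one. -/
def PhaseInvariant (e : N → S → ℕ) (κ ℓ T : ℕ) (f : ℕ → N → Finset N) (mover : ℕ → N)
    (dest : ℕ → Finset N) (t : ℕ) : Prop :=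
  ∃ q r, t = q * (κ - ℓ) + r ∧ r < κ - ℓ ∧
    (r = 0 ∧ IsRestState κ ℓ (f t) ∧ q * κ ≤ fullPotential e κ (f t) ∨
      0 < r ∧ ∃ C D, IsMidPhase κ ℓ r (f t) C D ∧ (t < T → mover t ∈ C ∧ dest t = D) ∧
        (q + 1) * κ ≤ phasePotential e κ (f t) D)

namespace IsImitativeRun

variable (R : IsImitativeRun e κ T f mover dest)
include R

theorem phaseInvariant_succ_of_move {t q r : ℕ} {C D : Finset N} (ht : t < T)
    (hqr : t = q * (κ - ℓ) + r) (hr : ℓ + r < κ) (hmid : IsMidPhase κ ℓ r (f t) C D)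
    (hm : mover t ∈ C) (hdest : dest t = D)
    -- `C.card * fullValue e κ C` is the potential lost by `C`; it is nonzero only when `r = 0`
    (hpot : (q + 1) * κ + C.card * fullValue e κ C ≤
      fullPotential e κ (f t) + κ * jointU e (insert (mover t) D)) :
    PhaseInvariant e κ ℓ T f mover dest (t + 1) := by
  subst hdest
  have hP := R.isPartitionMap t ht.le
  have hsource : f t (mover t) = C := hmid.source_block _ hm
  have hmid' := hmid.moveTo hP hm
  rw [← R.step t ht] at hmid'
  have hpot' : (q + 1) * κ ≤ phasePotential e κ (f (t + 1)) (insert (mover t) (dest t)) := by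
    have hmove := phasePotential_moveTo (e := e) hP hmid.target_block
      (disjoint_left.1 hmid.disjoint hm) (by rw [hmid.card_target]; omega)
      (by rw [hsource, ← hmid.card_source]; omega)
    rw [← R.step t ht, hsource] at hmove
    omega
  by_cases hfull : ℓ + (r + 1) = κ
  · refine ⟨q + 1, 0, ?_, by omega, Or.inl ⟨rfl, hmid'.isRestState hfull, ?_⟩⟩
    · rw [hqr, add_mul, one_mul]
      omega
    · rwa [phasePotential, if_neg (by rw [hmid'.card_target]; omega), add_zero] at hpot'
  · refine ⟨q, r + 1, by omega, by omega, Or.inr ⟨by omega, _, _, hmid', fun ht' => ?_, hpot'⟩⟩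
    rw [← hsource]
    exact R.imitate t ht' (by rw [hmid'.card_target]; omega)

theorem phaseInvariant_succ {t : ℕ} (ht : t < T) (h : PhaseInvariant e κ ℓ T f mover dest t) :
    PhaseInvariant e κ ℓ T f mover dest (t + 1) := by
  have hP := R.isPartitionMap t ht.le
  obtain ⟨q, r, hqr, hrd, ⟨rfl, hrest, hpot⟩ | ⟨hr, C, D, hmid, hnext, hpot⟩⟩ := h
  · have hmid := hrest.isMidPhase_zero hP (R.dest_eq t ht) (R.card_dest_lt t ht)
      (R.mover_notMem t ht)
    have hfull : (f t (mover t)).card = κ := hmid.card_source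
    refine R.phaseInvariant_succ_of_move ht hqr (by omega) hmid (hP.mem_self _) rfl ?_
    have hgain := Nat.mul_le_mul_left κ (Nat.succ_le_of_lt (R.better t ht))
    rw [Nat.mul_succ] at hgain
    rw [fullValue, if_pos hfull, hfull, add_mul, one_mul]
    omega
  · obtain ⟨hm, hdest⟩ := hnext ht
    refine R.phaseInvariant_succ_of_move ht hqr (by omega) hmid hm hdest ?_
    have hgrow := Nat.mul_le_mul_left κ (jointU_mono e (subset_insert (mover t) D))
    rw [fullValue_of_card_ne (by have := hmid.card_source; omega), mul_zero, add_zero]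
    rw [phasePotential, if_pos (by rw [hmid.card_target]; omega)] at hpot
    omega

theorem phaseInvariant (hinit : IsRestState κ ℓ (f 0)) (hℓ : ℓ < κ) :
    ∀ t, t ≤ T → PhaseInvariant e κ ℓ T f mover dest t := by
  intro t
  induction t with
  | zero => exact fun _ => ⟨0, 0, by simp, by omega, Or.inl ⟨rfl, hinit, by simp⟩⟩
  | succ t ih => exact fun ht => R.phaseInvariant_succ ht (ih (Nat.le_of_succ_le ht))

end IsImitativeRun

theorem PhaseInvariant.le_mul {β : ℕ} (hβ : ∀ i s, e i s ≤ β)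
    (h : PhaseInvariant e κ ℓ T f mover dest T) (hP : IsPartitionMap (f T)) :
    T ≤ β * Fintype.card S * (Fintype.card N / κ) * (κ - ℓ) := by
  obtain ⟨q, r, rfl, hrd, hstate⟩ := h
  have hκ : 0 < κ := by omega
  have hphases : ∀ p, p * κ ≤ κ * (Fintype.card N / κ) * (Fintype.card S * β) →
      p * (κ - ℓ) ≤ β * Fintype.card S * (Fintype.card N / κ) * (κ - ℓ) := by
    intro p hp
    refine Nat.mul_le_mul_right _ (Nat.le_of_mul_le_mul_left ?_ hκ)
    calc κ * p = p * κ := mul_comm κ p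
      _ ≤ κ * (β * Fintype.card S * (Fintype.card N / κ)) := by linarith
  obtain ⟨rfl, -, hpot⟩ | ⟨hr, C, D, hmid, -, hpot⟩ := hstate
  · simpa using hphases q (hpot.trans (fullPotential_le hβ hP))
  · have := hphases (q + 1) (hpot.trans (hmid.phasePotential_le hβ hP hr (by omega)))
    rw [add_mul, one_mul] at this
    omega

end Run

theorem imitative_better_response_terminates_general
    {N S : Type*} [DecidableEq N] [Fintype N] [Fintype S]
    (e : N → S → ℕ) (β κ : ℕ) (hβ : ∀ i s, e i s ≤ β)
    (L : Finset N) (hL : L.card < κ)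
    (T : ℕ) (f : ℕ → N → Finset N) (mover : ℕ → N) (dest : ℕ → Finset N)
    -- initial almost-full shape: every coalition has size exactly `κ`, except `L`
    (hinit : ∀ i, (f 0 i).card = κ ∨ f 0 i = L)
    (hpart : ∀ t, t ≤ T → IsPartitionMap (f t))
    -- each move is a better response to an existing, non-full coalition
    (hdest : ∀ t, t < T → ∃ j, dest t = f t j)
    (hnotmem : ∀ t, t < T → mover t ∉ dest t)
    (hroom : ∀ t, t < T → (dest t).card < κ)
    (hbetter : ∀ t, t < T →
      jointU e (f t (mover t)) < jointU e (insert (mover t) (dest t)))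
    (hstep : ∀ t, t < T → f (t + 1) = fun a =>
      if a ∈ insert (mover t) (dest t) then insert (mover t) (dest t)
      else (f t a).erase (mover t))
    -- imitative rule: while the last destination is still not full, an agent from the
    -- last mover's previous coalition imitates the last move
    (himit : ∀ t, t + 1 < T → (insert (mover t) (dest t)).card < κ →
      mover (t + 1) ∈ (f t (mover t)).erase (mover t) ∧
      dest (t + 1) = insert (mover t) (dest t))
    -- the dynamics has terminated: no better response is available at time `T`
    (hmax : ¬ ∃ i C, (∃ j, C = f T j) ∧ i ∉ C ∧ C.card < κ ∧
      jointU e (f T i) < jointU e (insert i C)) :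
    T ≤ β * Fintype.card S * (Fintype.card N / κ) * (κ - L.card) ∧
    NashStableHEG e κ (f T) := by
  have R : IsImitativeRun e κ T f mover dest :=
    ⟨hpart, hdest, hnotmem, hroom, hbetter, hstep, himit⟩
  refine ⟨?_, fun i C hC hi hCκ => not_lt.1 fun h => hmax ⟨i, C, hC, hi, hCκ, h⟩⟩
  exact (R.phaseInvariant ⟨L, rfl, hinit⟩ hL T le_rfl).le_mul hβ (hpart T le_rfl)

/-- in a `(0,β)`-HEG, imitative better response dynamics starting from a
partition into `⌊|N|/κ⌋` coalitions of size exactly `κ` plus one leftover coalition `L`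
with `|L| < κ` makes at most `β·|S|·⌊|N|/κ⌋·(κ−|L|)` individual moves, and when it
terminates (no better response is available) the resulting partition is Nash stable. -/
theorem imitative_better_response_terminates
    {N S : Type*} [DecidableEq N] [Fintype N] [Fintype S]
    (e : N → S → ℕ) (β κ : ℕ) (hβ : ∀ i s, e i s ≤ β) (hκ : 0 < κ)
    (L : Finset N) (hL : L.card < κ)
    (T : ℕ) (f : ℕ → N → Finset N) (mover : ℕ → N) (dest : ℕ → Finset N)
    -- initial almost-full shape: every coalition has size exactly `κ`, except `L`
    (hinit : ∀ i, (f 0 i).card = κ ∨ f 0 i = L)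
    (hpart : ∀ t, t ≤ T → IsPartitionMap (f t))
    -- each move is a better response to an existing, non-full coalition
    (hdest : ∀ t, t < T → ∃ j, dest t = f t j)
    (hnotmem : ∀ t, t < T → mover t ∉ dest t)
    (hroom : ∀ t, t < T → (dest t).card < κ)
    (hbetter : ∀ t, t < T →
      jointU e (f t (mover t)) < jointU e (insert (mover t) (dest t)))
    (hstep : ∀ t, t < T → f (t + 1) = fun a =>
      if a ∈ insert (mover t) (dest t) then insert (mover t) (dest t)
      else (f t a).erase (mover t))
    -- imitative rule: while the last destination is still not full, an agent from the
    -- last mover's previous coalition imitates the last move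
    (himit : ∀ t, t + 1 < T → (insert (mover t) (dest t)).card < κ →
      mover (t + 1) ∈ (f t (mover t)).erase (mover t) ∧
      dest (t + 1) = insert (mover t) (dest t))
    -- the dynamics has terminated: no better response is available at time `T`
    (hmax : ¬ ∃ i C, (∃ j, C = f T j) ∧ i ∉ C ∧ C.card < κ ∧
      jointU e (f T i) < jointU e (insert i C)) :
    T ≤ β * Fintype.card S * (Fintype.card N / κ) * (κ - L.card) ∧
    NashStableHEG e κ (f T) :=
  imitative_better_response_terminates_general e β κ hβ L hL T f mover dest hinit hpart hdest
    hnotmem hroom hbetter hstep himit hmax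
end
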